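/- arXiv:1907.07396 — 2 statements merged into one kernel-verified Lean document; each statement's English description precedes it below -/
import Mathlib

section
/- If a GES(n,k,t) exists, then there exists a binary matrix of size nk × n^{t+1} in which every column has exactly k ones, exactly one 1 in each of the k consecutive blocks of n rows, and any two distinct columns overlap (share a common 1) in at most t positions; consequently after normalizing columns by 1/√k its coherence is at most t/k. -/
/-- Two index tuples differ in exactly one coordinate. -/
def DiffersInOne {n t : ℕ} (i i' : Fin (t + 1) → Fin n) : Prop :=
  ∃ s, i s ≠ i' s ∧ ∀ s', s' ≠ s → i s' = i' s'

/-- A Generalized Euler Square GES(n,k,t). -/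
def IsGES (n k t : ℕ) {α : Type*} [DecidableEq α]
    (A : (Fin (t + 1) → Fin n) → Fin k → α) : Prop :=
  (∀ i i', DiffersInOne i i' → ∀ r, A i r ≠ A i' r) ∧
  (∀ i i', i ≠ i' → ¬DiffersInOne i i' →
    (Finset.univ.filter (fun r => A i r = A i' r)).card ≤ t)

/-- The row index `(l-1)·n + t_l + 1` (0-based: `l·n + i`) inside the `l`-th block. -/
def blockRow (n k : ℕ) (l : Fin k) (i : Fin n) : Fin (n * k) :=
  ⟨(l : ℕ) * n + (i : ℕ), by
    have h1 := l.isLt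
    have h2 := i.isLt
    calc (l : ℕ) * n + (i : ℕ) < (l : ℕ) * n + n := by omega
      _ = ((l : ℕ) + 1) * n := by ring
      _ ≤ k * n := Nat.mul_le_mul_right n h1
      _ = n * k := Nat.mul_comm _ _⟩

open Finset

/-!
Reading `blockRow n k l i` as the pair `(l, i)`, the column attached to a tuple `j` is the graph
of the word `A j : Fin k → Fin n`. Two columns therefore share a `1` exactly at the positions
where their words agree, and the GES axioms bound the number of such positions by `t` (by `0`
for tuples differing in one coordinate). After scaling by `1 / √k` the inner product of two
columns is their overlap divided by `k`.
-/

theorem blockRow_eq_cast_finProdFinEquiv (n k : ℕ) (l : Fin k) (i : Fin n) :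
    blockRow n k l i = Fin.cast (Nat.mul_comm k n) (finProdFinEquiv (l, i)) := by
  ext
  simp only [blockRow, Fin.val_cast, finProdFinEquiv_apply_val]
  ring

theorem blockRow_inj {n k : ℕ} {l l' : Fin k} {i i' : Fin n} :
    blockRow n k l i = blockRow n k l' i' ↔ l = l' ∧ i = i' := by
  simp only [blockRow_eq_cast_finProdFinEquiv, Fin.cast_inj, EmbeddingLike.apply_eq_iff_eq,
    Prod.mk.injEq]

section BlockSupport

variable {n k : ℕ}

def blockSupport (f : Fin k → Fin n) : Finset (Fin (n * k)) :=
  univ.image fun l => blockRow n k l (f l)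

theorem mem_blockSupport {f : Fin k → Fin n} {r : Fin (n * k)} :
    r ∈ blockSupport f ↔ ∃ l, blockRow n k l (f l) = r := by
  simp [blockSupport]

theorem blockRow_mem_blockSupport {f : Fin k → Fin n} {l : Fin k} {i : Fin n} :
    blockRow n k l i ∈ blockSupport f ↔ f l = i := by
  simp [mem_blockSupport, blockRow_inj]

theorem blockSupport_inter (f g : Fin k → Fin n) :
    blockSupport f ∩ blockSupport g =
      (univ.filter fun l => f l = g l).image fun l => blockRow n k l (f l) := by
  ext r
  simp only [mem_inter, mem_blockSupport, mem_image, mem_filter, mem_univ, true_and]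
  constructor
  · rintro ⟨⟨l, rfl⟩, l', h⟩
    obtain ⟨rfl, hfg⟩ := blockRow_inj.1 h
    exact ⟨_, hfg.symm, rfl⟩
  · rintro ⟨l, hfg, rfl⟩
    refine ⟨⟨l, rfl⟩, l, ?_⟩
    rw [hfg]

theorem blockRow_graph_injective (f : Fin k → Fin n) :
    Function.Injective fun l => blockRow n k l (f l) :=
  fun _ _ h => (blockRow_inj.1 h).1

theorem card_blockSupport (f : Fin k → Fin n) : #(blockSupport f) = k := by
  rw [blockSupport, card_image_of_injective _ (blockRow_graph_injective f), card_univ,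
    Fintype.card_fin]

theorem card_blockSupport_inter (f g : Fin k → Fin n) :
    #(blockSupport f ∩ blockSupport g) = #(univ.filter fun l => f l = g l) := by
  rw [blockSupport_inter, card_image_of_injective _ (blockRow_graph_injective f)]

end BlockSupport

theorem IsGES.card_agree_le {n k t : ℕ} {α : Type*} [DecidableEq α]
    {A : (Fin (t + 1) → Fin n) → Fin k → α} (hA : IsGES n k t A) {i i' : Fin (t + 1) → Fin n}
    (hne : i ≠ i') : #(univ.filter fun r => A i r = A i' r) ≤ t := by
  by_cases hd : DiffersInOne i i'
  · simp [filter_false_of_mem fun r _ => hA.1 i i' hd r]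
  · exact hA.2 i i' hne hd

theorem sum_normalized_indicator_mul_eq_card_inter {ι : Type*} [Fintype ι] [DecidableEq ι]
    (s s' : Finset ι) (k : ℕ) :
    ∑ i, (1 / Real.sqrt k * (if i ∈ s then 1 else 0)) *
        (1 / Real.sqrt k * (if i ∈ s' then 1 else 0)) = #(s ∩ s') / k := by
  have hk : (1 / Real.sqrt k) * (1 / Real.sqrt k) = 1 / k := by
    rw [one_div_mul_one_div, Real.mul_self_sqrt (Nat.cast_nonneg k)]
  calc _ = ∑ i, 1 / (k : ℝ) * (if i ∈ s ∩ s' then 1 else 0) := by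
        refine sum_congr rfl fun i _ => ?_
        rw [mul_mul_mul_comm, hk, ite_zero_mul_ite_zero, one_mul]
        simp only [mem_inter]
    _ = #(s ∩ s') / k := by
        rw [← mul_sum, sum_boole, filter_mem_eq_inter, univ_inter, one_div_mul_eq_div]

theorem binary_matrix_from_ges_general
    (n k t : ℕ)
    (hGES : ∃ A : (Fin (t + 1) → Fin n) → Fin k → Fin n, IsGES n k t A) :
    ∃ Φ : (Fin (t + 1) → Fin n) → Fin (n * k) → ℝ,
      (∀ j i, Φ j i = 0 ∨ Φ j i = 1) ∧
      (∀ j, (Finset.univ.filter (fun i => Φ j i = 1)).card = k) ∧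
      (∀ j (l : Fin k), ∃! i : Fin n, Φ j (blockRow n k l i) = 1) ∧
      (∀ j j', j ≠ j' →
        (Finset.univ.filter (fun i => Φ j i = 1 ∧ Φ j' i = 1)).card ≤ t) ∧
      (∀ j j', j ≠ j' →
        |∑ i, (1 / Real.sqrt k * Φ j i) * (1 / Real.sqrt k * Φ j' i)| ≤ (t : ℝ) / k) := by
  obtain ⟨A, hA⟩ := hGES
  have hoverlap : ∀ j j', j ≠ j' → #(blockSupport (A j) ∩ blockSupport (A j')) ≤ t :=
    fun j j' hne => (card_blockSupport_inter _ _).trans_le (hA.card_agree_le hne)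
  refine ⟨fun j r => if r ∈ blockSupport (A j) then 1 else 0, fun j r => ?_, fun j => ?_,
    fun j l => ?_, fun j j' hne => ?_, fun j j' hne => ?_⟩
  · exact (ite_eq_or_eq _ _ _).symm
  · simpa using card_blockSupport (A j)
  · simp [blockRow_mem_blockSupport]
  · convert hoverlap j j' hne using 2
    ext
    simp
  · rw [sum_normalized_indicator_mul_eq_card_inter, abs_of_nonneg (by positivity)]
    gcongr
    exact hoverlap j j' hne

/-- From a GES(n,k,t) one obtains an `nk × n^(t+1)` binary matrix whose
columns have exactly `k` ones, exactly one `1` in each of the `k` blocks of `n` rows,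
pairwise overlap at most `t`, and hence normalized coherence at most `t/k`. -/
theorem binary_matrix_from_ges
    (n k t : ℕ) (hk : 0 < k)
    (hGES : ∃ A : (Fin (t + 1) → Fin n) → Fin k → Fin n, IsGES n k t A) :
    ∃ Φ : (Fin (t + 1) → Fin n) → Fin (n * k) → ℝ,
      (∀ j i, Φ j i = 0 ∨ Φ j i = 1) ∧
      (∀ j, (Finset.univ.filter (fun i => Φ j i = 1)).card = k) ∧
      (∀ j (l : Fin k), ∃! i : Fin n, Φ j (blockRow n k l i) = 1) ∧
      (∀ j j', j ≠ j' →
        (Finset.univ.filter (fun i => Φ j i = 1 ∧ Φ j' i = 1)).card ≤ t) ∧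
      (∀ j j', j ≠ j' →
        |∑ i, (1 / Real.sqrt k * Φ j i) * (1 / Real.sqrt k * Φ j' i)| ≤ (t : ℝ) / k) :=
  binary_matrix_from_ges_general n k t hGES
end

section
/- Let Φ₀ = (1/√k)Φ(n,k,t) be the normalized GES matrix (binary matrix with k ones per column, pairwise column overlap at most t). Then Φ₀ satisfies RIP of order k' with constant δ_{k'} = t(k'−1)/k for any k' < k/t + 1; in particular δ_{k'} < 1. -/
/-!
The Gram matrix of `Φ₀ = Φ / √k` has unit diagonal (each column has `k` ones) and off-diagonal
entries at most `t / k` (two columns share at most `t` ones), i.e. coherence `μ ≤ t / k`.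
For a `k'`-sparse `x`, the deviation `‖Φ₀ x‖² - ‖x‖²` is the off-diagonal part of the quadratic
form, bounded by `μ ((∑ |xⱼ|)² - ‖x‖²)`, and Cauchy–Schwarz on the support gives
`(∑ |xⱼ|)² ≤ k' ‖x‖²`. Hence `|‖Φ₀ x‖² - ‖x‖²| ≤ (k' - 1) μ ‖x‖²`.
-/

open Finset Matrix

def HasRIP {m ι : Type*} [Fintype m] [Fintype ι] (A : Matrix m ι ℝ) (s : ℕ) (δ : ℝ) : Prop :=
  ∀ x : ι → ℝ, #{j | x j ≠ 0} ≤ s →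
    (1 - δ) * ∑ j, x j ^ 2 ≤ ∑ i, (A *ᵥ x) i ^ 2 ∧ ∑ i, (A *ᵥ x) i ^ 2 ≤ (1 + δ) * ∑ j, x j ^ 2

section Coherence

variable {m ι : Type*} [Fintype m] [Fintype ι]

theorem sum_mulVec_sq_eq_dotProduct_gram (A : Matrix m ι ℝ) (x : ι → ℝ) :
    ∑ i, (A *ᵥ x) i ^ 2 = x ⬝ᵥ (Aᵀ * A) *ᵥ x := by
  rw [← mulVec_mulVec, dotProduct_mulVec, vecMul_transpose]
  simp only [dotProduct, sq]

theorem sq_sum_abs_le_card_support_mul_sum_sq (x : ι → ℝ) :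
    (∑ j, |x j|) ^ 2 ≤ #{j | x j ≠ 0} * ∑ j, x j ^ 2 := by
  have hsupp : ∀ f : ι → ℝ, (∀ j, x j = 0 → f j = 0) → ∑ j ∈ {j | x j ≠ 0}, f j = ∑ j, f j :=
    fun f hf => sum_filter_of_ne fun j _ hfj hxj => hfj (hf j hxj)
  rw [← hsupp _ fun j hj => by simp [hj], ← hsupp _ fun j hj => by simp [hj]]
  simpa only [sq_abs] using sq_sum_le_card_mul_sum_sq (f := fun j => |x j|)

theorem abs_dotProduct_mulVec_le_of_diag_eq_zero [DecidableEq ι] {H : Matrix ι ι ℝ} {μ : ℝ}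
    (hdiag : ∀ j, H j j = 0) (hoff : ∀ j j', j ≠ j' → |H j j'| ≤ μ) (x : ι → ℝ) :
    |x ⬝ᵥ H *ᵥ x| ≤ μ * ((∑ j, |x j|) ^ 2 - ∑ j, x j ^ 2) := by
  have hterm : ∀ j j', |x j * (H j j' * x j')|
      ≤ μ * (|x j| * |x j'|) - if j = j' then μ * x j ^ 2 else 0 := by
    intro j j'
    rcases eq_or_ne j j' with rfl | hjj'
    · simp [hdiag, sq]
    · simpa [hjj', abs_mul, mul_comm, mul_left_comm, mul_assoc] using
        mul_le_mul_of_nonneg_right (hoff j j' hjj') (by positivity : 0 ≤ |x j| * |x j'|)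
  calc |x ⬝ᵥ H *ᵥ x| ≤ ∑ j, ∑ j', |x j * (H j j' * x j')| := by
        simp only [dotProduct, mulVec, mul_sum]
        exact (abs_sum_le_sum_abs _ _).trans (sum_le_sum fun j _ => abs_sum_le_sum_abs _ _)
    _ ≤ ∑ j, ∑ j', (μ * (|x j| * |x j'|) - if j = j' then μ * x j ^ 2 else 0) :=
        sum_le_sum fun j _ => sum_le_sum fun j' _ => hterm j j'
    _ = μ * ((∑ j, |x j|) ^ 2 - ∑ j, x j ^ 2) := by
        simp only [sum_sub_distrib, sum_ite_eq, mem_univ, if_true, ← mul_sum, sq, sum_mul_sum]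
        ring

theorem hasRIP_of_coherence (A : Matrix m ι ℝ) {μ : ℝ} (hμ : 0 ≤ μ)
    (hnorm : ∀ j, (Aᵀ * A) j j = 1) (hcoh : ∀ j j', j ≠ j' → |(Aᵀ * A) j j'| ≤ μ)
    (s : ℕ) {δ : ℝ} (hδ : (s - 1) * μ ≤ δ) : HasRIP A s δ := by
  classical
  intro x hx
  have hD : 0 ≤ ∑ j, x j ^ 2 := sum_nonneg fun j _ => sq_nonneg _
  have hsparse : (∑ j, |x j|) ^ 2 ≤ s * ∑ j, x j ^ 2 :=
    (sq_sum_abs_le_card_support_mul_sum_sq x).trans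
      (mul_le_mul_of_nonneg_right (by exact_mod_cast hx) hD)
  have hoffdiag : |x ⬝ᵥ (Aᵀ * A - 1) *ᵥ x| ≤ μ * ((∑ j, |x j|) ^ 2 - ∑ j, x j ^ 2) :=
    abs_dotProduct_mulVec_le_of_diag_eq_zero (by simp [hnorm])
      (fun j j' hjj' => by simpa [one_apply_ne hjj'] using hcoh j j' hjj') x
  have hdev : |∑ i, (A *ᵥ x) i ^ 2 - ∑ j, x j ^ 2| ≤ δ * ∑ j, x j ^ 2 := by
    calc |∑ i, (A *ᵥ x) i ^ 2 - ∑ j, x j ^ 2| = |x ⬝ᵥ (Aᵀ * A - 1) *ᵥ x| := by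
          rw [sum_mulVec_sq_eq_dotProduct_gram, sub_mulVec, dotProduct_sub, one_mulVec]
          simp only [dotProduct, sq]
      _ ≤ μ * ((∑ j, |x j|) ^ 2 - ∑ j, x j ^ 2) := hoffdiag
      _ ≤ (s - 1) * μ * ∑ j, x j ^ 2 := by nlinarith [mul_le_mul_of_nonneg_left hsparse hμ]
      _ ≤ δ * ∑ j, x j ^ 2 := mul_le_mul_of_nonneg_right hδ hD
  constructor <;> linarith [abs_le.1 hdev]

end Coherence

theorem gram_apply_of_binary {m ι : Type*} [Fintype m] {Φ : Matrix m ι ℝ}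
    (hbin : ∀ i j, Φ i j = 0 ∨ Φ i j = 1) (j j' : ι) :
    (Φᵀ * Φ) j j' = #{i | Φ i j = 1 ∧ Φ i j' = 1} := by
  classical
  rw [mul_apply, ← sum_boole]
  refine sum_congr rfl fun i _ => ?_
  rcases hbin i j with h | h <;> rcases hbin i j' with h' | h' <;> simp [h, h']

theorem ges_matrix_rip_general
    (n k t : ℕ) (hk : 0 < k)
    (Φ : Matrix (Fin (n * k)) (Fin (n ^ (t + 1))) ℝ)
    (hbin : ∀ i j, Φ i j = 0 ∨ Φ i j = 1)
    (hcols : ∀ j, (Finset.univ.filter (fun i => Φ i j = 1)).card = k)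
    (hover : ∀ j j', j ≠ j' →
      (Finset.univ.filter (fun i => Φ i j = 1 ∧ Φ i j' = 1)).card ≤ t)
    (k' : ℕ) (hk' : (k' : ℝ) < (k : ℝ) / t + 1) :
    (t : ℝ) * ((k' : ℝ) - 1) / k < 1 ∧
      ∀ x : Fin (n ^ (t + 1)) → ℝ,
        (Finset.univ.filter (fun j => x j ≠ 0)).card ≤ k' →
        (1 - (t : ℝ) * ((k' : ℝ) - 1) / k) * (∑ j, x j ^ 2) ≤
            ∑ i, (((1 / Real.sqrt k) • Φ).mulVec x i) ^ 2 ∧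
          ∑ i, (((1 / Real.sqrt k) • Φ).mulVec x i) ^ 2 ≤
            (1 + (t : ℝ) * ((k' : ℝ) - 1) / k) * (∑ j, x j ^ 2) := by
  have hkR : (0 : ℝ) < k := by exact_mod_cast hk
  have hgram : ∀ j j', (((1 / √k) • Φ)ᵀ * ((1 / √k) • Φ)) j j'
      = #{i | Φ i j = 1 ∧ Φ i j' = 1} / k := by
    intro j j'
    rw [transpose_smul, smul_mul, Matrix.mul_smul, smul_smul, Matrix.smul_apply, gram_apply_of_binary hbin,
      smul_eq_mul, div_mul_div_comm, one_mul, Real.mul_self_sqrt hkR.le, one_div_mul_eq_div]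
  refine ⟨?_, hasRIP_of_coherence _ (μ := t / k) (by positivity) (fun j => ?_)
    (fun j j' hjj' => ?_) k' (by rw [mul_div_assoc', mul_comm])⟩
  · rw [div_lt_one hkR]
    rcases t.eq_zero_or_pos with rfl | ht
    · simpa using hkR
    · exact (lt_div_iff₀' (by exact_mod_cast ht)).1 (sub_lt_iff_lt_add.2 hk')
  · simp only [hgram, and_self, hcols, div_self hkR.ne']
  · rw [hgram, abs_of_nonneg (by positivity)]
    gcongr
    exact_mod_cast hover j j' hjj'

/-- The normalized GES matrix `Φ₀ = (1/√k)Φ(n,k,t)` (binary, `k` ones per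
column, pairwise column overlap at most `t`) satisfies RIP of order `k'` with constant
`δ_{k'} = t(k'−1)/k` for any `k' < k/t + 1`; in particular `δ_{k'} < 1`. -/
theorem ges_matrix_rip
    (n k t : ℕ) (hk : 0 < k) (ht : 0 < t)
    (Φ : Matrix (Fin (n * k)) (Fin (n ^ (t + 1))) ℝ)
    (hbin : ∀ i j, Φ i j = 0 ∨ Φ i j = 1)
    (hcols : ∀ j, (Finset.univ.filter (fun i => Φ i j = 1)).card = k)
    (hover : ∀ j j', j ≠ j' →
      (Finset.univ.filter (fun i => Φ i j = 1 ∧ Φ i j' = 1)).card ≤ t)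
    (k' : ℕ) (hk' : (k' : ℝ) < (k : ℝ) / t + 1) :
    (t : ℝ) * ((k' : ℝ) - 1) / k < 1 ∧
      ∀ x : Fin (n ^ (t + 1)) → ℝ,
        (Finset.univ.filter (fun j => x j ≠ 0)).card ≤ k' →
        (1 - (t : ℝ) * ((k' : ℝ) - 1) / k) * (∑ j, x j ^ 2) ≤
            ∑ i, (((1 / Real.sqrt k) • Φ).mulVec x i) ^ 2 ∧
          ∑ i, (((1 / Real.sqrt k) • Φ).mulVec x i) ^ 2 ≤
            (1 + (t : ℝ) * ((k' : ℝ) - 1) / k) * (∑ j, x j ^ 2) :=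
  ges_matrix_rip_general n k t hk Φ hbin hcols hover k' hk'
end
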